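/- arXiv:1501.05896 — 3 statements merged into one kernel-verified Lean document; each statement's English description precedes it below -/
import Mathlib

section
/- Let D be a closed convex subset of the Euclidean space ℝ^m with nonempty interior, let x ∈ ℝ^m satisfy dist(x, D) > 0, and let y ∈ D be the (unique) nearest point of D to x, i.e. |y − x| = dist(x, D). Then for every point a in the interior of D one has ⟨x − a, y − x⟩ ≤ − dist(a, ∂D) · |y − x|. -/
/-!
The nearest point `y` of a convex set `D` to `x` satisfies `⟪x - y, w - y⟫ ≤ 0` for every `w`
in the closure of `D`. For an interior point `a` and `r = dist(a, ∂D)`, the open ball `B(a, r)`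
is connected and misses `∂D`, so it lies in `D` and its closure in the closure of `D`. Testing
with `w = a + r • (x - y) / ‖x - y‖` gives `⟪x - y, a - y⟫ ≤ -r ‖x - y‖`, and
`⟪x - a, y - x⟫ = ⟪x - y, a - y⟫ - ‖x - y‖²`.
-/

open Metric Set
open scoped RealInnerProductSpace

section Frontier

variable {E : Type*} [NormedAddCommGroup E] [NormedSpace ℝ E] {s : Set E} {a : E}

theorem ball_infDist_frontier_subset_interior (ha : a ∈ interior s) :
    ball a (infDist a (frontier s)) ⊆ interior s := by
  intro z hz
  have hr : 0 < infDist a (frontier s) := dist_nonneg.trans_lt (mem_ball.1 hz)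
  have hcover : ball a (infDist a (frontier s)) ⊆ interior s ∪ interior sᶜ := fun w hw => by
    rw [← compl_frontier_eq_union_interior]
    exact notMem_of_dist_lt_infDist (by rwa [dist_comm, ← mem_ball])
  exact (convex_ball a _).isPreconnected.subset_left_of_subset_union isOpen_interior
    isOpen_interior (disjoint_compl_right.mono interior_subset interior_subset) hcover
    ⟨a, mem_ball_self hr, ha⟩ hz

theorem infDist_frontier_le_infDist_compl (ha : a ∈ interior s) :
    infDist a (frontier s) ≤ infDist a sᶜ := by
  rcases sᶜ.eq_empty_or_nonempty with hs | hs
  · rw [compl_empty_iff.1 hs, frontier_univ, infDist_empty]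
    exact infDist_nonneg
  refine (le_infDist hs).2 fun z hz => not_lt.1 fun hlt => hz ?_
  exact interior_subset (ball_infDist_frontier_subset_interior ha (mem_ball'.2 hlt))

theorem closedBall_infDist_frontier_subset_closure (ha : a ∈ interior s) :
    closedBall a (infDist a (frontier s)) ⊆ closure s :=
  (closedBall_subset_closedBall (infDist_frontier_le_infDist_compl ha)).trans
    (closedBall_infDist_compl_subset_closure (interior_subset ha))

end Frontier

section NearestPoint

variable {F : Type*} [NormedAddCommGroup F] [InnerProductSpace ℝ F] {K : Set F} {x y : F}

theorem inner_sub_nearest_le_zero_of_mem_closure (hK : Convex ℝ K) (hy : y ∈ K)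
    (hmin : ‖x - y‖ = ⨅ w : K, ‖x - w‖) {w : F} (hw : w ∈ closure K) :
    ⟪x - y, w - y⟫ ≤ 0 := by
  have hclosed : IsClosed {w : F | ⟪x - y, w - y⟫ ≤ 0} := isClosed_le (by fun_prop) continuous_const
  exact closure_minimal ((norm_eq_iInf_iff_real_inner_le_zero hK hy).1 hmin) hclosed hw

theorem inner_sub_nearest_add_mul_norm_le_zero (hK : Convex ℝ K) (hy : y ∈ K)
    (hmin : ‖x - y‖ = ⨅ w : K, ‖x - w‖) {a : F} {r : ℝ} (hr : 0 ≤ r)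
    (hball : closedBall a r ⊆ closure K) :
    ⟪x - y, a - y⟫ + r * ‖x - y‖ ≤ 0 := by
  set v := x - y
  -- `‖v‖⁻¹ • v` is a unit vector, or `0` when `v = 0`; either way the identity below holds.
  have hnorm : ‖v‖⁻¹ * (‖v‖ * ‖v‖) = ‖v‖ := by rw [inv_mul_eq_div, mul_self_div_self]
  have hw : a + (r * ‖v‖⁻¹) • v ∈ closedBall a r := by
    rw [mem_closedBall, dist_eq_norm, add_sub_cancel_left, norm_smul, Real.norm_eq_abs,
      abs_of_nonneg (by positivity), mul_assoc]
    exact mul_le_of_le_one_right hr (inv_mul_le_one_of_le₀ le_rfl (norm_nonneg v))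
  calc ⟪v, a - y⟫ + r * ‖v‖ = ⟪v, a + (r * ‖v‖⁻¹) • v - y⟫ := by
        rw [add_sub_right_comm, inner_add_right, real_inner_smul_right,
          real_inner_self_eq_norm_mul_norm, mul_assoc, hnorm]
    _ ≤ 0 := inner_sub_nearest_le_zero_of_mem_closure hK hy hmin (hball hw)

end NearestPoint

theorem inner_sub_nearest_point_le_neg_infDist_frontier_mul_general
    (m : ℕ) (D : Set (EuclideanSpace ℝ (Fin m)))
    (hconv : Convex ℝ D)
    (x : EuclideanSpace ℝ (Fin m))
    (y : EuclideanSpace ℝ (Fin m)) (hyD : y ∈ D)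
    (hy : ‖y - x‖ = Metric.infDist x D)
    (a : EuclideanSpace ℝ (Fin m)) (ha : a ∈ interior D) :
    ⟪x - a, y - x⟫ ≤ -Metric.infDist a (frontier D) * ‖y - x‖ := by
  have hmin : ‖x - y‖ = ⨅ w : D, ‖x - w‖ := by
    rw [norm_sub_rev, hy, infDist_eq_iInf]
    exact iInf_congr fun w => dist_eq_norm x w
  have key := inner_sub_nearest_add_mul_norm_le_zero hconv hyD hmin infDist_nonneg
    (closedBall_infDist_frontier_subset_closure ha)
  have hsplit : ⟪x - a, y - x⟫ = ⟪x - y, a - y⟫ - ‖x - y‖ ^ 2 := by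
    rw [← real_inner_self_eq_norm_sq, ← neg_sub x y, inner_neg_right,
      ← sub_sub_sub_cancel_right x a y, inner_sub_left, real_inner_comm (a - y)]
    ring
  rw [hsplit, norm_sub_rev y x]
  linarith [sq_nonneg ‖x - y‖]

/-- Lemma 2.1(c), last assertion: if `y` is the nearest point of the closed convex set `D`
to a point `x` with `dist(x, D) > 0`, then for every interior point `a` of `D`,
`⟨x - a, y - x⟩ ≤ - dist(a, ∂D) ⬝ ‖y - x‖`. -/
theorem inner_sub_nearest_point_le_neg_infDist_frontier_mul
    (m : ℕ) (D : Set (EuclideanSpace ℝ (Fin m)))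
    (hclosed : IsClosed D) (hconv : Convex ℝ D)
    (x : EuclideanSpace ℝ (Fin m)) (hx : 0 < Metric.infDist x D)
    (y : EuclideanSpace ℝ (Fin m)) (hyD : y ∈ D)
    (hy : ‖y - x‖ = Metric.infDist x D)
    (a : EuclideanSpace ℝ (Fin m)) (ha : a ∈ interior D) :
    ⟪x - a, y - x⟫ ≤ -Metric.infDist a (frontier D) * ‖y - x‖ :=
  inner_sub_nearest_point_le_neg_infDist_frontier_mul_general m D hconv x y hyD hy a ha
end

section
/- Let D and D' be nonempty closed convex subsets of the Euclidean space ℝ^m, and let Π_D, Π_{D'} denote the metric projections onto D and D' respectively. Then for all y, y' ∈ ℝ^m one has ⟨y − y', (Π_D(y) − y) − (Π_{D'}(y') − y')⟩ ≤ |Π_D(Π_{D'}(y')) − Π_{D'}(y')| · |y − Π_D(y)| + |Π_{D'}(Π_D(y)) − Π_D(y)| · |y' − Π_{D'}(y')|. -/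
open scoped RealInnerProductSpace

lemma proj_var_ineq {m : ℕ} {D : Set (EuclideanSpace ℝ (Fin m))} (hconv : Convex ℝ D)
    {x p : EuclideanSpace ℝ (Fin m)} (hp : p ∈ D) (hd : ‖x - p‖ = Metric.infDist x D)
    {w : EuclideanSpace ℝ (Fin m)} (hw : w ∈ D) : ⟪x - p, w - p⟫ ≤ 0 := by
  have h : ‖x - p‖ = ⨅ w : D, ‖x - w‖ := by
    rw [hd, Metric.infDist_eq_iInf]
    simp [dist_eq_norm]
  exact (norm_eq_iInf_iff_real_inner_le_zero hconv hp).mp h w hw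

/-- Deterministic core (inequality (4.03)) of Lemma 4.2: for metric projections `Π_D`, `Π_D'`
onto nonempty closed convex sets `D`, `D'` and all `y, y'`,
`⟨y - y', (Π_D y - y) - (Π_D' y' - y')⟩
  ≤ ‖Π_D(Π_D' y') - Π_D' y'‖ ⬝ ‖y - Π_D y‖ + ‖Π_D'(Π_D y) - Π_D y‖ ⬝ ‖y' - Π_D' y'‖`. -/
theorem inner_sub_pen_terms_le
    (m : ℕ) (D D' : Set (EuclideanSpace ℝ (Fin m)))
    (hne : D.Nonempty) (hclosed : IsClosed D) (hconv : Convex ℝ D)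
    (hne' : D'.Nonempty) (hclosed' : IsClosed D') (hconv' : Convex ℝ D')
    (projD projD' : EuclideanSpace ℝ (Fin m) → EuclideanSpace ℝ (Fin m))
    (hprojDMem : ∀ x, projD x ∈ D)
    (hprojDDist : ∀ x, ‖x - projD x‖ = Metric.infDist x D)
    (hprojD'Mem : ∀ x, projD' x ∈ D')
    (hprojD'Dist : ∀ x, ‖x - projD' x‖ = Metric.infDist x D')
    (y y' : EuclideanSpace ℝ (Fin m)) :
    ⟪y - y', (projD y - y) - (projD' y' - y')⟫ ≤
      ‖projD (projD' y') - projD' y'‖ * ‖y - projD y‖ +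
        ‖projD' (projD y) - projD y‖ * ‖y' - projD' y'‖ := by
  set p := projD y with hp
  set p' := projD' y' with hp'
  set q := projD p' with hq
  set q' := projD' p with hq'
  -- Decompose the inner product
  have e1 : ⟪y - y', (p - y) - (p' - y')⟫ =
      ⟪(y - p) - (y' - p'), (y' - p') - (y - p)⟫ + ⟪p - p', y' - p'⟫ - ⟪p - p', y - p⟫ := by
    have h1 : y - y' = ((y - p) - (y' - p')) + (p - p') := by abel
    have h2 : (p - y) - (p' - y') = (y' - p') - (y - p) := by abel
    rw [h1, h2]
    simp only [inner_add_left, inner_sub_right]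
    ring
  -- First term is nonpositive
  have t1 : ⟪(y - p) - (y' - p'), (y' - p') - (y - p)⟫ ≤ 0 := by
    rw [show (y' - p') - (y - p) = -((y - p) - (y' - p')) by abel, inner_neg_right]
    exact neg_nonpos.mpr real_inner_self_nonneg
  -- Second term
  have e2 : ⟪p - p', y' - p'⟫ = ⟪p - q', y' - p'⟫ + ⟪q' - p', y' - p'⟫ := by
    rw [show p - p' = (p - q') + (q' - p') by abel, inner_add_left]
  have t2a : ⟪p - q', y' - p'⟫ ≤ ‖q' - p‖ * ‖y' - p'‖ := by
    calc ⟪p - q', y' - p'⟫ ≤ ‖p - q'‖ * ‖y' - p'‖ := real_inner_le_norm _ _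
    _ = ‖q' - p‖ * ‖y' - p'‖ := by rw [norm_sub_rev]
  have t2b : ⟪q' - p', y' - p'⟫ ≤ 0 := by
    rw [real_inner_comm]
    exact proj_var_ineq hconv' (hprojD'Mem y') (hprojD'Dist y') (hprojD'Mem p)
  -- Third term
  have e3 : ⟪p - p', y - p⟫ = ⟪p - q, y - p⟫ + ⟪q - p', y - p⟫ := by
    rw [show p - p' = (p - q) + (q - p') by abel, inner_add_left]
  have t3a : -⟪q - p', y - p⟫ ≤ ‖q - p'‖ * ‖y - p‖ := by
    calc -⟪q - p', y - p⟫ = ⟪p' - q, y - p⟫ := by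
          rw [show p' - q = -(q - p') by abel, inner_neg_left]
    _ ≤ ‖p' - q‖ * ‖y - p‖ := real_inner_le_norm _ _
    _ = ‖q - p'‖ * ‖y - p‖ := by rw [norm_sub_rev]
  have t3b : 0 ≤ ⟪p - q, y - p⟫ := by
    have := proj_var_ineq hconv (hprojDMem y) (hprojDDist y) (hprojDMem p')
    rw [real_inner_comm] at this
    rw [show p - q = -(q - p) by abel, inner_neg_left]
    linarith
  have goal_eq : ‖projD (projD' y') - projD' y'‖ * ‖y - projD y‖ +
        ‖projD' (projD y) - projD y‖ * ‖y' - projD' y'‖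
      = ‖q - p'‖ * ‖y - p‖ + ‖q' - p‖ * ‖y' - p'‖ := rfl
  rw [goal_eq, e1, e2, e3]
  linarith
end

section
/- Let 1 < q ≤ 2 and set c(q) = q(q−1)/2. Then for all x, v in the Euclidean space ℝ^m with x ≠ 0, one has |x + v|^q − |x|^q − q|x|^{q−1}⟨x/|x|, v⟩ ≥ c(q) |v|² (max(|x|², |x + v|²))^{q/2 − 1}. -/
/-!
Along the segment, `g t = ‖x + t • v‖ ^ q = P t ^ (q / 2)` with the quadratic
`P t = ‖v‖² t² + 2 ⟪x, v⟫ t + ‖x‖²`. Cauchy–Schwarz gives `P'² ≤ 4 ‖v‖² P`, hence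
`g'' ≥ q (q - 1) ‖v‖² P ^ (q / 2 - 1)`; as `P` is convex and `q / 2 - 1 ≤ 0`, this is at least
`q (q - 1) ‖v‖² M ^ (q / 2 - 1)` with `M = max (P 0) (P 1)`. Second-order Taylor on `[0, 1]` then
gives the bound. Since `P` may vanish on `[0, 1]` (e.g. for `v = -x`), the argument is run for
`P + ε` and `ε → 0⁺`.
-/

open Set Filter
open scoped RealInnerProductSpace

lemma sub_le_sub_of_hasDerivAt_le {f g f' g' : ℝ → ℝ} {a b : ℝ} (hab : a ≤ b)
    (hf : ∀ t ∈ Icc a b, HasDerivAt f (f' t) t) (hg : ∀ t ∈ Icc a b, HasDerivAt g (g' t) t)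
    (hle : ∀ t ∈ Ioo a b, f' t ≤ g' t) : f b - f a ≤ g b - g a := by
  have hmono : MonotoneOn (fun t ↦ g t - f t) (Icc a b) := by
    refine monotoneOn_of_hasDerivWithinAt_nonneg (convex_Icc a b) (f' := fun t ↦ g' t - f' t)
      (fun t ht ↦ ((hg t ht).sub (hf t ht)).continuousAt.continuousWithinAt) ?_ ?_ <;>
      intro t ht <;> rw [interior_Icc] at ht
    · exact ((hg t (Ioo_subset_Icc_self ht)).sub (hf t (Ioo_subset_Icc_self ht))).hasDerivWithinAt
    · exact sub_nonneg.2 (hle t ht)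
  have := hmono (left_mem_Icc.2 hab) (right_mem_Icc.2 hab) hab
  linarith

lemma add_deriv_mul_add_le_of_le_deriv2 {g g' g'' : ℝ → ℝ} {a b L : ℝ} (hab : a ≤ b)
    (hg : ∀ t ∈ Icc a b, HasDerivAt g (g' t) t) (hg' : ∀ t ∈ Icc a b, HasDerivAt g' (g'' t) t)
    (hL : ∀ t ∈ Icc a b, L ≤ g'' t) :
    g a + g' a * (b - a) + L / 2 * (b - a) ^ 2 ≤ g b := by
  have hslope : ∀ t ∈ Icc a b, g' a + L * (t - a) ≤ g' t := by
    intro t ht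
    have hsub : Icc a t ⊆ Icc a b := Icc_subset_Icc_right ht.2
    have := sub_le_sub_of_hasDerivAt_le (f' := fun _ ↦ L) ht.1 (fun s _ ↦ hasDerivAt_mul_const L)
      (fun s hs ↦ hg' s (hsub hs)) (fun s hs ↦ hL s (hsub (Ioo_subset_Icc_self hs)))
    linarith
  have hquad : ∀ t, HasDerivAt (fun s ↦ g' a * s + L / 2 * (s - a) ^ 2) (g' a + L * (t - a)) t :=
    fun t ↦ (((hasDerivAt_id' t).const_mul (g' a)).add
      ((((hasDerivAt_id' t).sub_const a).pow 2).const_mul (L / 2))).congr_deriv (by ring)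
  have := sub_le_sub_of_hasDerivAt_le hab (fun t _ ↦ hquad t) hg
    (fun t ht ↦ hslope t (Ioo_subset_Icc_self ht))
  linarith

-- The right side is `(P ^ (q / 2))''` at a point where `P = p`, `P' = d` and `P'' = 2 * w`.
lemma le_second_deriv_rpow_half {q p d w M : ℝ} (hq1 : 1 < q) (hq2 : q ≤ 2) (hw : 0 ≤ w)
    (hp : 0 < p) (hpM : p ≤ M) (hd : d ^ 2 ≤ 4 * w * p) :
    q * (q - 1) * w * M ^ (q / 2 - 1) ≤
      q * w * p ^ (q / 2 - 1) + q / 2 * (q / 2 - 1) * d ^ 2 * p ^ (q / 2 - 2) := by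
  have hd' : d ^ 2 * p ^ (q / 2 - 2) ≤ 4 * w * p ^ (q / 2 - 1) := calc
    d ^ 2 * p ^ (q / 2 - 2) ≤ 4 * w * p * p ^ (q / 2 - 2) := by gcongr
    _ = 4 * w * p ^ (q / 2 - 1) := by
      rw [show q / 2 - 1 = q / 2 - 2 + 1 by ring, Real.rpow_add_one hp.ne']; ring
  have hM : M ^ (q / 2 - 1) ≤ p ^ (q / 2 - 1) := Real.rpow_le_rpow_of_nonpos hp hpM (by linarith)
  have hcoef : q / 2 * (q / 2 - 1) ≤ 0 := mul_nonpos_of_nonneg_of_nonpos (by linarith) (by linarith)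
  calc q * (q - 1) * w * M ^ (q / 2 - 1) ≤ q * (q - 1) * w * p ^ (q / 2 - 1) :=
        mul_le_mul_of_nonneg_left hM (mul_nonneg (mul_nonneg (by linarith) (by linarith)) hw)
    _ = q * w * p ^ (q / 2 - 1) + q / 2 * (q / 2 - 1) * (4 * w * p ^ (q / 2 - 1)) := by ring
    _ ≤ q * w * p ^ (q / 2 - 1) + q / 2 * (q / 2 - 1) * (d ^ 2 * p ^ (q / 2 - 2)) := by
      linarith [mul_le_mul_of_nonpos_left hd' hcoef]
    _ = _ := by ring

lemma sq_rpow_half {r : ℝ} (hr : 0 ≤ r) (s : ℝ) : (r ^ 2) ^ (s / 2) = r ^ s := by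
  rw [← Real.rpow_natCast_mul hr]; congr 1; push_cast; ring

section Quadratic

variable {q b c w : ℝ}

lemma quadratic_le_max (hw : 0 ≤ w) {t : ℝ} (ht : t ∈ Icc (0 : ℝ) 1) :
    w * t ^ 2 + 2 * b * t + c ≤ max c (w + 2 * b + c) := by
  have hchord : w * t ^ 2 + 2 * b * t + c ≤ (1 - t) * c + t * (w + 2 * b + c) := by
    nlinarith [mul_nonneg (mul_nonneg hw ht.1) (sub_nonneg.2 ht.2)]
  nlinarith [mul_nonneg (sub_nonneg.2 ht.2) (sub_nonneg.2 (le_max_left c (w + 2 * b + c))),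
    mul_nonneg ht.1 (sub_nonneg.2 (le_max_right c (w + 2 * b + c)))]

lemma quadratic_nonneg (hw : 0 ≤ w) (hc : 0 ≤ c) (hb : b ^ 2 ≤ c * w) (t : ℝ) :
    0 ≤ w * t ^ 2 + 2 * b * t + c := by
  rcases hw.eq_or_lt with rfl | hw
  · obtain rfl : b = 0 := by simpa using hb
    simpa using hc
  -- `w * P t = (w * t + b) ^ 2 + (c * w - b ^ 2)`
  · nlinarith [sq_nonneg (w * t + b)]

lemma deriv_quadratic_sq_le (hb : b ^ 2 ≤ c * w) (t : ℝ) :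
    (2 * w * t + 2 * b) ^ 2 ≤ 4 * w * (w * t ^ 2 + 2 * b * t + c) := by
  nlinarith

lemma quadratic_rpow_taylor_of_pos (hq1 : 1 < q) (hq2 : q ≤ 2) (hw : 0 ≤ w)
    (hb : b ^ 2 ≤ c * w) (hpos : ∀ t ∈ Icc (0 : ℝ) 1, 0 < w * t ^ 2 + 2 * b * t + c) :
    q * (q - 1) / 2 * w * max c (w + 2 * b + c) ^ (q / 2 - 1) ≤
      (w + 2 * b + c) ^ (q / 2) - c ^ (q / 2) - q * c ^ (q / 2 - 1) * b := by
  set P : ℝ → ℝ := fun t ↦ w * t ^ 2 + 2 * b * t + c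
  have hP : ∀ t, HasDerivAt P (2 * w * t + 2 * b) t := fun t ↦
    ((((hasDerivAt_id' t).pow 2).const_mul w).add
      ((hasDerivAt_id' t).const_mul (2 * b))).add_const c |>.congr_deriv (by ring)
  have hP' : ∀ t, HasDerivAt (fun t ↦ 2 * w * t + 2 * b) (2 * w) t := fun t ↦
    (((hasDerivAt_id' t).const_mul (2 * w)).add_const (2 * b)).congr_deriv (by ring)
  have hg : ∀ t ∈ Icc (0 : ℝ) 1, HasDerivAt (fun t ↦ P t ^ (q / 2))
      ((2 * w * t + 2 * b) * (q / 2) * P t ^ (q / 2 - 1)) t :=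
    fun t ht ↦ (hP t).rpow_const (Or.inl (hpos t ht).ne')
  have hg' : ∀ t ∈ Icc (0 : ℝ) 1,
      HasDerivAt (fun t ↦ (2 * w * t + 2 * b) * (q / 2) * P t ^ (q / 2 - 1))
        (q * w * P t ^ (q / 2 - 1) +
          q / 2 * (q / 2 - 1) * (2 * w * t + 2 * b) ^ 2 * P t ^ (q / 2 - 2)) t := by
    intro t ht
    refine (((hP' t).mul_const (q / 2)).mul
      ((hP t).rpow_const (p := q / 2 - 1) (Or.inl (hpos t ht).ne'))).congr_deriv ?_
    rw [show q / 2 - 1 - 1 = q / 2 - 2 by ring]; ring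
  have key := add_deriv_mul_add_le_of_le_deriv2 zero_le_one hg hg' fun t ht ↦
    le_second_deriv_rpow_half hq1 hq2 hw (hpos t ht) (quadratic_le_max hw ht)
      (deriv_quadratic_sq_le hb t)
  norm_num [P] at key
  linarith

lemma quadratic_rpow_taylor (hq1 : 1 < q) (hq2 : q ≤ 2) (hw : 0 ≤ w) (hc : 0 < c)
    (hb : b ^ 2 ≤ c * w) :
    q * (q - 1) / 2 * w * max c (w + 2 * b + c) ^ (q / 2 - 1) ≤
      (w + 2 * b + c) ^ (q / 2) - c ^ (q / 2) - q * c ^ (q / 2 - 1) * b := by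
  set M := max c (w + 2 * b + c)
  have hM : 0 < M := hc.trans_le (le_max_left _ _)
  have hreg : ∀ ε ∈ Ioi (0 : ℝ), q * (q - 1) / 2 * w * (M + ε) ^ (q / 2 - 1) ≤
      (w + 2 * b + c + ε) ^ (q / 2) - (c + ε) ^ (q / 2) - q * (c + ε) ^ (q / 2 - 1) * b := by
    intro ε (hε : 0 < ε)
    have hbε : b ^ 2 ≤ (c + ε) * w := by nlinarith [mul_nonneg hε.le hw]
    have := quadratic_rpow_taylor_of_pos hq1 hq2 hw hbε fun t _ ↦ by
      linarith [quadratic_nonneg hw hc.le hb t]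
    rwa [← add_assoc, max_add_add_right] at this
  have hF : ContinuousWithinAt (fun ε ↦ q * (q - 1) / 2 * w * (M + ε) ^ (q / 2 - 1)) (Ioi 0) 0 := by
    fun_prop (disch := simp [hM.ne'])
  have hG : ContinuousWithinAt (fun ε ↦ (w + 2 * b + c + ε) ^ (q / 2) - (c + ε) ^ (q / 2) -
      q * (c + ε) ^ (q / 2 - 1) * b) (Ioi 0) 0 := by
    have : 0 ≤ q / 2 := by linarith
    fun_prop (disch := first | exact Or.inr this | exact Or.inl (by simpa using hc.ne'))
  simpa using hF.closure_le (by simp) hG hreg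

end Quadratic

/-- Key pointwise estimate behind Corollary 2.4: for `1 < q ≤ 2`, `c(q) = q(q-1)/2`, and
`x ≠ 0`, one has
`|x + v|^q - |x|^q - q |x|^{q-1} ⟨x/|x|, v⟩ ≥ c(q) |v|² (max(|x|², |x+v|²))^{q/2 - 1}`. -/
theorem rpow_taylor_lower_bound
    (m : ℕ) (q : ℝ) (hq1 : 1 < q) (hq2 : q ≤ 2)
    (x v : EuclideanSpace ℝ (Fin m)) (hx : x ≠ 0) :
    q * (q - 1) / 2 * ‖v‖ ^ 2 * (max (‖x‖ ^ 2) (‖x + v‖ ^ 2)) ^ (q / 2 - 1) ≤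
      ‖x + v‖ ^ q - ‖x‖ ^ q - q * ‖x‖ ^ (q - 1) * ⟪‖x‖⁻¹ • x, v⟫ := by
  have hx' : 0 < ‖x‖ := norm_pos_iff.2 hx
  have hCS : ⟪x, v⟫ ^ 2 ≤ ‖x‖ ^ 2 * ‖v‖ ^ 2 := by
    simpa [mul_pow] using pow_le_pow_left₀ (abs_nonneg _) (abs_real_inner_le_norm x v) 2
  have key := quadratic_rpow_taylor hq1 hq2 (sq_nonneg ‖v‖) (pow_pos hx' 2) hCS
  rw [show ‖v‖ ^ 2 + 2 * ⟪x, v⟫ + ‖x‖ ^ 2 = ‖x + v‖ ^ 2 by rw [norm_add_sq_real]; ring,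
    sq_rpow_half (norm_nonneg _), sq_rpow_half (norm_nonneg _)] at key
  have hinner : q * ‖x‖ ^ (q - 1) * ⟪‖x‖⁻¹ • x, v⟫ = q * (‖x‖ ^ 2) ^ (q / 2 - 1) * ⟪x, v⟫ := by
    rw [real_inner_smul_left, show q / 2 - 1 = (q - 2) / 2 by ring, sq_rpow_half (norm_nonneg _),
      show q - 2 = q - 1 - 1 by ring, Real.rpow_sub_one hx'.ne' (q - 1)]
    field_simp
  rwa [hinner]
end
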